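/- For every p ∈ ℕ^n, the mountain pass level satisfies d_0^p > c_0^p. -/

import Mathlib

open Filter Topology

namespace FK

noncomputable section

abbrev Zn (n : ℕ) := Fin n → ℤ

variable {n : ℕ}

/-- the ℓ¹ norm `‖i‖ = ∑ |i_j|` on `ℤⁿ` -/
def znorm (i : Zn n) : ℕ := ∑ j, (i j).natAbs

/-- the finite ball `{j : ‖j - i‖ ≤ r}` as a `Finset` -/
def ball (r : ℕ) (i : Zn n) : Finset (Zn n) :=
  (Finset.Icc (fun m => i m - (r : ℤ)) (fun m => i m + (r : ℤ))).filter fun j => znorm (j - i) ≤ r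

/-- the shift `(shift j u) i = u (i + j)`, i.e. `τ_{-jₙ}ⁿ ⋯ τ_{-j₁}¹ u` -/
def shift (j : Zn n) (u : Zn n → ℝ) : Zn n → ℝ := fun i => u (i + j)

/-- the local potential `S_j(u) = s(τ_{-j} u)` -/
def Spot (s : (Zn n → ℝ) → ℝ) (j : Zn n) (u : Zn n → ℝ) : ℝ := s (shift j u)

/-- partial derivative `∂_i F(u)` of a functional `F` with respect to the coordinate `u(i)` -/
def pd (F : (Zn n → ℝ) → ℝ) (i : Zn n) (u : Zn n → ℝ) : ℝ :=
  deriv (fun t => F (Function.update u i t)) (u i)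

/-- second partial derivative `∂_{i,k} F(u)` -/
def pd2 (F : (Zn n → ℝ) → ℝ) (i k : Zn n) (u : Zn n → ℝ) : ℝ :=
  pd (fun w => pd F k w) i u

/-- the gradient field `W(u)(i) = ∑_{j : ‖j-i‖ ≤ r} ∂_i S_j(u)` -/
def grad (r : ℕ) (s : (Zn n → ℝ) → ℝ) (u : Zn n → ℝ) : Zn n → ℝ :=
  fun i => ∑ j ∈ ball r i, pd (Spot s j) i u

/-- `u` is a solution of the Euler–Lagrange equation (EL):
`∑_{j : ‖j-i‖ ≤ r} ∂_i S_j(u) = 0` for all `i` -/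
def IsSolution (r : ℕ) (s : (Zn n → ℝ) → ℝ) (u : Zn n → ℝ) : Prop :=
  ∀ i, grad r s u i = 0

/-- the standard basis vector `e_m` -/
def unitv (m : Fin n) : Zn n := fun m' => if m' = m then 1 else 0

/-- the first standard basis vector `e₁` -/
def e1v : Zn n := fun m => if (m : ℕ) = 0 then 1 else 0

/-- `u` has period `p m` in the `m`-th coordinate direction, for every `m` -/
def Periodic (p : Fin n → ℕ) (u : Zn n → ℝ) : Prop :=
  ∀ (i : Zn n) (m : Fin n), u (i + (p m : ℤ) • unitv m) = u i

/-- `u` is `1`-periodic in every coordinate direction -/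
def PeriodicAll (u : Zn n → ℝ) : Prop := Periodic (fun _ => 1) u

/-- `J_0(u) = S_0(u)` -/
def J0 (s : (Zn n → ℝ) → ℝ) (u : Zn n → ℝ) : ℝ := Spot s 0 u

/-- `c_0 = inf J_0` over fully periodic configurations -/
def c0 (s : (Zn n → ℝ) → ℝ) : ℝ := sInf {y | ∃ u, PeriodicAll u ∧ J0 s u = y}

/-- `M_0`, the set of fully periodic minimizers of `J_0` -/
def M0 (s : (Zn n → ℝ) → ℝ) : Set (Zn n → ℝ) := {u | PeriodicAll u ∧ J0 s u = c0 s}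

/-- the fundamental domain `T_0^p = ∏_j {0, …, p_j - 1}` -/
def Tbox (p : Fin n → ℕ) : Finset (Zn n) :=
  Finset.Icc 0 fun m => (p m : ℤ) - 1

/-- `J_0^p(u) = ∑_{j ∈ T_0^p} S_j(u)` -/
def J0p (s : (Zn n → ℝ) → ℝ) (p : Fin n → ℕ) (u : Zn n → ℝ) : ℝ :=
  ∑ j ∈ Tbox p, Spot s j u

/-- `c_0^p = inf J_0^p` over `Λ_0^p` -/
def c0p (s : (Zn n → ℝ) → ℝ) (p : Fin n → ℕ) : ℝ :=
  sInf {y | ∃ u, Periodic p u ∧ J0p s p u = y}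

/-- `I_0^p(u) = J_0^p(u + v_0)` -/
def I0p (s : (Zn n → ℝ) → ℝ) (p : Fin n → ℕ) (v0 u : Zn n → ℝ) : ℝ :=
  J0p s p (u + v0)

/-- the norm `‖u‖_{Λ_0^p} = (∑_{j ∈ T_0^p} |u(j)|²)^{1/2}` -/
def lamNorm (p : Fin n → ℕ) (u : Zn n → ℝ) : ℝ :=
  Real.sqrt (∑ j ∈ Tbox p, (u j) ^ 2)

/-- `G_0^p = {u ∈ Λ_0^p : 0 ≤ u ≤ w_0 - v_0}` -/
def G0 (p : Fin n → ℕ) (v0 w0 : Zn n → ℝ) : Set (Zn n → ℝ) :=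
  {u | Periodic p u ∧ 0 ≤ u ∧ u ≤ w0 - v0}

/-- the isometric identification of `Λ_0^p` with the euclidean space `ℝ^{T_0^p}` -/
def toEuc (p : Fin n → ℕ) (u : Zn n → ℝ) : EuclideanSpace ℝ (Tbox (n := n) p) :=
  WithLp.toLp 2 fun j => u j.1

/-- inverse of `toEuc`: extend values on `T_0^p` `p`-periodically -/
def extendP (p : Fin n → ℕ) (x : EuclideanSpace ℝ (Tbox (n := n) p)) : Zn n → ℝ :=
  fun i => if h : (fun m => i m % (p m : ℤ)) ∈ Tbox p then x ⟨_, h⟩ else 0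

/-- `I_0^p` read through the identification of `Λ_0^p` with euclidean space -/
def I0euc (s : (Zn n → ℝ) → ℝ) (p : Fin n → ℕ) (v0 : Zn n → ℝ) :
    EuclideanSpace ℝ (Tbox (n := n) p) → ℝ :=
  fun x => I0p s p v0 (extendP p x)

/-- `(I_0^p)'(u) = 0`: vanishing of the Fréchet derivative of `I_0^p` at `u`, computed through
the isometric identification of `Λ_0^p` with euclidean space -/
def IsCrit0 (s : (Zn n → ℝ) → ℝ) (p : Fin n → ℕ) (v0 : Zn n → ℝ) (u : Zn n → ℝ) : Prop :=
  fderiv ℝ (I0euc s p v0) (toEuc p u) = 0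

/-- membership in `H_0^p`: a norm-continuous path in `G_0^p` from `0` to `w_0 - v_0` -/
def PathIn (p : Fin n → ℕ) (v0 w0 : Zn n → ℝ) (h : ℝ → Zn n → ℝ) : Prop :=
  ContinuousOn (fun θ => toEuc p (h θ)) (Set.Icc 0 1) ∧
  (∀ θ ∈ Set.Icc (0 : ℝ) 1, h θ ∈ G0 p v0 w0) ∧
  h 0 = 0 ∧ h 1 = w0 - v0

/-- the mountain pass level `d_0^p = inf_{h ∈ H_0^p} max_{θ ∈ [0,1]} I_0^p(h(θ))` -/
def d0p (s : (Zn n → ℝ) → ℝ) (p : Fin n → ℕ) (v0 w0 : Zn n → ℝ) : ℝ :=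
  sInf {y | ∃ h, PathIn p v0 w0 h ∧
    y = sSup ((fun θ => I0p s p v0 (h θ)) '' Set.Icc 0 1)}

/-- `Φ` is the (negative gradient) semiflow of `I_0^p` on `Λ_0^p`:
`-∂_t Φ_t(u)(i) = ∑_{j : ‖j-i‖ ≤ r} ∂_i S_j(Φ_t(u) + v_0)`, `Φ_0(u) = u` -/
def IsFlow (r : ℕ) (s : (Zn n → ℝ) → ℝ) (p : Fin n → ℕ) (v0 : Zn n → ℝ)
    (Φ : ℝ → (Zn n → ℝ) → (Zn n → ℝ)) : Prop :=
  (∀ u, Periodic p u → ∀ t, Periodic p (Φ t u)) ∧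
  (∀ u, Φ 0 u = u) ∧
  (∀ u, Periodic p u → ∀ i, ∀ t ∈ Set.Ici (0 : ℝ),
    HasDerivWithinAt (fun τ => Φ τ u i) (-(grad r s (Φ t u + v0) i)) (Set.Ici 0) t)

/-- `p(k) = (k, 1, …, 1)` -/
def pk (n k : ℕ) : Fin n → ℕ := fun m => if (m : ℕ) = 0 then k else 1

/-- `u` touches `v` from below -/
def TouchesBelow (u v : Zn n → ℝ) : Prop := u ≤ v ∧ u ≠ v ∧ ∃ i, u i = v i

/-- `θ̲_t = sup {θ ∈ [0,1] : Φ_t(h(θ)) ≤ u₀, Φ_t(h(θ)) ≠ u₀}` -/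
def thetaLow (Φ : ℝ → (Zn n → ℝ) → (Zn n → ℝ)) (h : ℝ → Zn n → ℝ) (u0 : Zn n → ℝ)
    (t : ℝ) : ℝ :=
  sSup {θ | θ ∈ Set.Icc (0 : ℝ) 1 ∧ Φ t (h θ) ≤ u0 ∧ Φ t (h θ) ≠ u0}

/-- `θ̄_t = inf {θ ∈ [0,1] : Φ_t(h(θ)) ≥ u₀, Φ_t(h(θ)) ≠ u₀}` -/
def thetaHigh (Φ : ℝ → (Zn n → ℝ) → (Zn n → ℝ)) (h : ℝ → Zn n → ℝ) (u0 : Zn n → ℝ)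
    (t : ℝ) : ℝ :=
  sInf {θ | θ ∈ Set.Icc (0 : ℝ) 1 ∧ u0 ≤ Φ t (h θ) ∧ Φ t (h θ) ≠ u0}

/-- `s` read through the identification of `ℝ^{B_0^r}` with euclidean space (used to state that
`s ∈ C²(ℝ^{B_0^r}, ℝ)`) -/
def sEuc (r : ℕ) (s : (Zn n → ℝ) → ℝ) : EuclideanSpace ℝ (ball r (0 : Zn n)) → ℝ :=
  fun x => s fun i => if h : i ∈ ball r (0 : Zn n) then x ⟨i, h⟩ else 0

/-- The standing assumptions on the generalized Frenkel–Kontorova model: `s ∈ C²(ℝ^{B_0^r}, ℝ)`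
(encoded by `localized` and `smooth`) satisfying (S1)–(S4). -/
structure Setup (n r : ℕ) : Type where
  /-- the local potential -/
  s : (Zn n → ℝ) → ℝ
  npos : 0 < n
  /-- `s` only depends on the coordinates in `B_0^r` -/
  localized : ∀ u v : Zn n → ℝ, (∀ k, znorm k ≤ r → u k = v k) → s u = s v
  /-- `s` is `C²` -/
  smooth : ContDiff ℝ 2 (sEuc r s)
  /-- (S1): periodicity -/
  S1 : ∀ u : Zn n → ℝ, s (fun i => u i + 1) = s u
  /-- (S2): bounded below -/
  S2_bddBelow : ∃ b : ℝ, ∀ u, b ≤ s u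
  /-- (S2): coercivity -/
  S2_coercive : ∀ k j : Zn n, znorm k ≤ r → znorm j ≤ r → znorm (k - j) = 1 →
    ∀ M : ℝ, ∃ R : ℝ, ∀ u : Zn n → ℝ, R ≤ |u k - u j| → M ≤ s u
  /-- (S3): off-diagonal second partials nonpositive -/
  S3 : ∀ k j : Zn n, znorm k ≤ r → znorm j ≤ r → k ≠ j → ∀ u, pd2 s k j u ≤ 0
  /-- (S3): strict negativity for nearest neighbours of `0` -/
  S3' : ∀ j : Zn n, znorm j = 1 → ∀ u, pd2 s 0 j u < 0
  /-- the constant of (S4) -/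
  C : ℝ
  /-- (S4): uniformly bounded second partials -/
  S4 : ∀ i k : Zn n, znorm i ≤ r → znorm k ≤ r → ∀ u, |pd2 s i k u| ≤ C

/-- 1-periodicity in the directions `e_2, …, e_n` with periods `q` -/
def Periodic1 (q : Fin n → ℕ) (u : Zn n → ℝ) : Prop :=
  ∀ (i : Zn n) (m : Fin n), 1 ≤ (m : ℕ) → u (i + (q m : ℤ) • unitv m) = u i

/-- the slab `{i} × T_1^q` as a `Finset` -/
def slab (q : Fin n → ℕ) (i : ℤ) : Finset (Zn n) :=
  Finset.Icc (fun m => if (m : ℕ) = 0 then i else 0)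
    (fun m => if (m : ℕ) = 0 then i else (q m : ℤ) - 1)

/-- membership in `Λ_1^q` -/
def MemLam1 (q : Fin n → ℕ) (u : Zn n → ℝ) : Prop :=
  Periodic1 q u ∧ Summable fun i : ℤ => ∑ j ∈ slab q i, |u j|

/-- the norm `‖u‖_{Λ_1^q} = ∑_{ℤ × T_1^q} |u(j)| + (∑_{ℤ × T_1^q} |u(j)|²)^{1/2}` -/
def lamNorm1 (q : Fin n → ℕ) (u : Zn n → ℝ) : ℝ :=
  (∑' i : ℤ, ∑ j ∈ slab q i, |u j|) + Real.sqrt (∑' i : ℤ, ∑ j ∈ slab q i, (u j) ^ 2)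

/-- `J_1(u) = liminf_{p → -∞, q → ∞} ∑_{i=p}^q [J_0(τ^1_{-i} u) - c_0]` -/
def J1 (s : (Zn n → ℝ) → ℝ) (u : Zn n → ℝ) : ℝ :=
  liminf (fun pq : ℤ × ℤ => ∑ i ∈ Finset.Icc pq.1 pq.2, (Spot s (i • e1v) u - c0 s))
    (atBot ×ˢ atTop)

/-- the class `Γ_1(v_0, w_0)` of heteroclinic configurations from `v_0` to `w_0` -/
def Gamma1 (v0 w0 : Zn n → ℝ) : Set (Zn n → ℝ) :=
  {u | Periodic1 (fun _ => 1) u ∧ v0 ≤ u ∧ u ≤ w0 ∧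
    Tendsto (fun i : ℤ => u (i • e1v) - v0 (i • e1v)) atBot (nhds 0) ∧
    Tendsto (fun i : ℤ => u (i • e1v) - w0 (i • e1v)) atTop (nhds 0)}

/-- `c_1(v_0, w_0) = inf_{Γ_1(v_0,w_0)} J_1` -/
def c1 (s : (Zn n → ℝ) → ℝ) (v0 w0 : Zn n → ℝ) : ℝ :=
  sInf {y | ∃ u ∈ Gamma1 v0 w0, J1 s u = y}

/-- `M_1(v_0, w_0)`, the minimizers of `J_1` on `Γ_1(v_0, w_0)` -/
def M1 (s : (Zn n → ℝ) → ℝ) (v0 w0 : Zn n → ℝ) : Set (Zn n → ℝ) :=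
  {u | u ∈ Gamma1 v0 w0 ∧ J1 s u = c1 s v0 w0}

/-- `I_1^q(u) = liminf_{p → -∞, q' → ∞} ∑_{i=p}^{q'} ∑_{j ∈ {i} × T_1^q} [S_j(u + v_1) - c_0]` -/
def I1q (s : (Zn n → ℝ) → ℝ) (v1 : Zn n → ℝ) (q : Fin n → ℕ) (u : Zn n → ℝ) : ℝ :=
  liminf (fun pq : ℤ × ℤ =>
      ∑ i ∈ Finset.Icc pq.1 pq.2, ∑ j ∈ slab q i, (Spot s j (u + v1) - c0 s))
    (atBot ×ˢ atTop)

/-- the pairing `(I_1^q)'(u) v = ∑_{i ∈ ℤ} ∑_{j ∈ {i} × T_1^q} v(j) ∑_{k : ‖k-j‖ ≤ r} ∂_j S_k(u + v_1)` -/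
def pair1 (r : ℕ) (s : (Zn n → ℝ) → ℝ) (v1 : Zn n → ℝ) (q : Fin n → ℕ)
    (u v : Zn n → ℝ) : ℝ :=
  ∑' i : ℤ, ∑ j ∈ slab q i, v j * grad r s (u + v1) j

/-- `(I_1^q)'(u) = 0` -/
def IsCrit1 (r : ℕ) (s : (Zn n → ℝ) → ℝ) (v1 : Zn n → ℝ) (q : Fin n → ℕ)
    (u : Zn n → ℝ) : Prop :=
  ∀ v, MemLam1 q v → pair1 r s v1 q u v = 0

/-- `G_1^q = {u ∈ Λ_1^q : 0 ≤ u ≤ w_1 - v_1}` -/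
def G1 (q : Fin n → ℕ) (v1 w1 : Zn n → ℝ) : Set (Zn n → ℝ) :=
  {u | MemLam1 q u ∧ 0 ≤ u ∧ u ≤ w1 - v1}

/-- membership in `H_1^q`: a `‖·‖_{Λ_1^q}`-continuous path in `G_1^q` from `0` to `w_1 - v_1` -/
def Path1 (q : Fin n → ℕ) (v1 w1 : Zn n → ℝ) (h : ℝ → Zn n → ℝ) : Prop :=
  (∀ θ ∈ Set.Icc (0 : ℝ) 1, h θ ∈ G1 q v1 w1) ∧ h 0 = 0 ∧ h 1 = w1 - v1 ∧
  ∀ θ ∈ Set.Icc (0 : ℝ) 1, ∀ ε > (0 : ℝ), ∃ δ > (0 : ℝ), ∀ θ' ∈ Set.Icc (0 : ℝ) 1,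
    |θ' - θ| ≤ δ → lamNorm1 q (h θ' - h θ) ≤ ε

/-- the heteroclinic mountain pass level `d_1^q` -/
def d1q (s : (Zn n → ℝ) → ℝ) (v1 w1 : Zn n → ℝ) (q : Fin n → ℕ) : ℝ :=
  sInf {y | ∃ h, Path1 q v1 w1 h ∧
    y = sSup ((fun θ => I1q s v1 q (h θ)) '' Set.Icc 0 1)}

/-- `q(k) = (k, 1, …, 1) ∈ ℕ^{n-1}` (indexed by the directions `e_2, …, e_n`) -/
def qk (n k : ℕ) : Fin n → ℕ := fun m => if (m : ℕ) = 1 then k else 1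

/-!
Every path in `H_0^p` crosses the slice of `G_0^p` on which `u(0)` lies halfway between `v_0(0)`
and `w_0(0)`, by the intermediate value theorem. This slice is compact, so `I_0^p` attains its
minimum on it, and that minimum exceeds `c_0^p`: otherwise `u + v_0` minimizes `J_0^p`, and
minimizers of `J_0^p` are `1`-periodic in every direction, so `u + v_0` would be an element of
`M_0` strictly between `v_0` and `w_0`.

Minimizers are `1`-periodic because of (S3). The sign condition makes `J_0^p` submodular, so the
infimum of two minimizers is a minimizer; the strict sign on nearest neighbours gives a strong
comparison principle, by which two ordered minimizers that touch coincide. Hence a minimizer and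
its translate by `e_m` are ordered, and a periodic configuration ordered with its translate equals
it.
-/

section Lattice

lemma znorm_neg (i : Zn n) : znorm (-i) = znorm i := by
  simp [znorm]

lemma mem_ball_zero {r : ℕ} {j : Zn n} : j ∈ ball r 0 ↔ znorm j ≤ r := by
  simp only [ball, Finset.mem_filter, Finset.mem_Icc, sub_zero, and_iff_right_iff_imp]
  intro h
  have hcoord : ∀ m, (j m).natAbs ≤ r := fun m =>
    (Finset.single_le_sum (fun _ _ => Nat.zero_le _) (Finset.mem_univ m)).trans h
  refine ⟨fun m => ?_, fun m => ?_⟩ <;> have := hcoord m <;> simp <;> omega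

lemma unitv_eq_single (m : Fin n) : unitv m = Pi.single m 1 := by
  funext m'
  simp [unitv, Pi.single_apply]

lemma znorm_unitv (m : Fin n) : znorm (unitv m) = 1 := by
  simp only [znorm, unitv]
  rw [Finset.sum_eq_single m] <;> simp +contextual

lemma sum_smul_unitv (v : Zn n) : ∑ m, v m • unitv m = v := by
  simp_rw [unitv_eq_single, ← Pi.single_smul, smul_eq_mul, mul_one]
  exact Finset.univ_sum_single v

def periods {α : Type*} (f : Zn n → α) : AddSubgroup (Zn n) where
  carrier := {v | ∀ x, f (x + v) = f x}
  zero_mem' _ := by rw [add_zero]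
  add_mem' {a b} ha hb x := by rw [← add_assoc, hb, ha]
  neg_mem' {a} ha x := by rw [← ha (x + -a), neg_add_cancel_right]

lemma eq_of_forall_add_unitv {α : Type*} {f : Zn n → α} (hf : ∀ x m, f (x + unitv m) = f x)
    (x y : Zn n) : f x = f y := by
  have hall : ∀ v, v ∈ periods f := fun v => by
    rw [← sum_smul_unitv v]
    exact AddSubgroup.sum_mem _ fun m _ =>
      AddSubgroup.zsmul_mem _ (show unitv m ∈ periods f from (hf · m)) _
  simpa using (hall (y - x) x).symm

lemma exists_adjacent_boundary (Q : Zn n → Prop) {a b : Zn n} (ha : Q a) (hb : ¬Q b) :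
    ∃ i j, Q i ∧ ¬Q j ∧ znorm (j - i) = 1 := by
  by_contra! h
  have hclosed : ∀ x m, Q (x + unitv m) = Q x := fun x m => propext
    ⟨fun hq => by_contra fun hx =>
      h _ _ hq hx (by rw [sub_add_cancel_left, znorm_neg, znorm_unitv]),
     fun hq => by_contra fun hx => h _ _ hq hx (by rw [add_sub_cancel_left, znorm_unitv])⟩
  exact hb (eq_of_forall_add_unitv hclosed a b ▸ ha)

end Lattice

section Periodicity

variable {p : Fin n → ℕ}

def reduce (p : Fin n → ℕ) (i : Zn n) : Zn n := fun m => i m % (p m : ℤ)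

lemma mem_Tbox {j : Zn n} : j ∈ Tbox p ↔ ∀ m, 0 ≤ j m ∧ j m ≤ (p m : ℤ) - 1 := by
  simp only [Tbox, Finset.mem_Icc, Pi.le_def, Pi.zero_apply]
  exact ⟨fun h m => ⟨h.1 m, h.2 m⟩, fun h => ⟨fun m => (h m).1, fun m => (h m).2⟩⟩

lemma reduce_mem_Tbox (hp : ∀ m, 1 ≤ p m) (i : Zn n) : reduce p i ∈ Tbox p := by
  refine mem_Tbox.mpr fun m => ?_
  have hpm : (0 : ℤ) < p m := by exact_mod_cast hp m
  have := Int.emod_lt_of_pos (i m) hpm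
  exact ⟨Int.emod_nonneg _ hpm.ne', by simp only [reduce]; omega⟩

lemma reduce_eq_self {j : Zn n} (hj : j ∈ Tbox p) : reduce p j = j :=
  funext fun m => Int.emod_eq_of_lt (mem_Tbox.mp hj m).1 (by have := (mem_Tbox.mp hj m).2; omega)

lemma zero_mem_Tbox (hp : ∀ m, 1 ≤ p m) : (0 : Zn n) ∈ Tbox p :=
  mem_Tbox.mpr fun m => ⟨le_rfl, by have := hp m; simp only [Pi.zero_apply]; omega⟩

lemma reduce_add_reduce (x y : Zn n) : reduce p (x + reduce p y) = reduce p (x + y) :=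
  funext fun _ => Int.add_emod_emod _ _ _

lemma Periodic.apply_add_of_dvd {u : Zn n → ℝ} (hu : Periodic p u) {v : Zn n}
    (hv : ∀ m, (p m : ℤ) ∣ v m) (x : Zn n) : u (x + v) = u x := by
  suffices v ∈ periods u from this x
  rw [← sum_smul_unitv v]
  refine AddSubgroup.sum_mem _ fun m _ => ?_
  rw [← Int.ediv_mul_cancel (hv m), mul_smul]
  exact AddSubgroup.zsmul_mem _ (show (p m : ℤ) • unitv m ∈ periods u from (hu · m)) _

lemma Periodic.apply_reduce {u : Zn n → ℝ} (hu : Periodic p u) (x : Zn n) :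
    u (reduce p x) = u x := by
  simpa using hu.apply_add_of_dvd (v := reduce p x - x)
    (fun m => (Int.mod_modEq (x m) (p m)).symm.dvd) x

lemma Periodic.apply_eq_of_reduce_eq {u : Zn n → ℝ} (hu : Periodic p u) {x y : Zn n}
    (h : reduce p x = reduce p y) : u x = u y := by
  rw [← hu.apply_reduce x, h, hu.apply_reduce]

lemma PeriodicAll.apply_eq {u : Zn n → ℝ} (hu : PeriodicAll u) (x y : Zn n) : u x = u y :=
  eq_of_forall_add_unitv (fun x m => by simpa using hu x m) x y

lemma PeriodicAll.periodic {u : Zn n → ℝ} (hu : PeriodicAll u) : Periodic p u :=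
  fun _ _ => hu.apply_eq _ _

lemma periodic_shift {u : Zn n → ℝ} (hu : Periodic p u) (j : Zn n) : Periodic p (shift j u) :=
  fun i m => by simpa only [FK.shift, add_right_comm] using hu (i + j) m

lemma Periodic.shift_reduce {u : Zn n → ℝ} (hu : Periodic p u) (j : Zn n) :
    shift (reduce p j) u = shift j u :=
  funext fun i => hu.apply_eq_of_reduce_eq (reduce_add_reduce i j)

lemma Periodic.add {u v : Zn n → ℝ} (hu : Periodic p u) (hv : Periodic p v) :
    Periodic p (u + v) := fun i m => by simp only [Pi.add_apply, hu i m, hv i m]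

lemma Periodic.smul {u : Zn n → ℝ} (hu : Periodic p u) (c : ℝ) : Periodic p (c • u) :=
  fun i m => by simp only [Pi.smul_apply, hu i m]

lemma Periodic.inf {u v : Zn n → ℝ} (hu : Periodic p u) (hv : Periodic p v) :
    Periodic p (u ⊓ v) := fun i m => by simp only [Pi.inf_apply, hu i m, hv i m]

lemma Periodic.sup {u v : Zn n → ℝ} (hu : Periodic p u) (hv : Periodic p v) :
    Periodic p (u ⊔ v) := fun i m => by simp only [Pi.sup_apply, hu i m, hv i m]

lemma Periodic.sub {u v : Zn n → ℝ} (hu : Periodic p u) (hv : Periodic p v) :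
    Periodic p (u - v) := fun i m => by simp only [Pi.sub_apply, hu i m, hv i m]

lemma Periodic.neg {u : Zn n → ℝ} (hu : Periodic p u) : Periodic p (-u) :=
  fun i m => by simp only [Pi.neg_apply, hu i m]

lemma Periodic.shift_unitv_eq_of_le (hp : ∀ m, 1 ≤ p m) {u : Zn n → ℝ} (hu : Periodic p u)
    {m : Fin n} (h : u ≤ shift (unitv m) u) : shift (unitv m) u = u := by
  funext i
  set c : ℕ → ℝ := fun k => u (i + (k : ℤ) • unitv m)
  have hmono : Monotone c := monotone_nat_of_le_succ fun k => by
    simp only [c, Nat.cast_succ, add_smul, one_smul, ← add_assoc]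
    exact h _
  have hper : c (p m) = c 0 := by simpa [c] using hu i m
  have : c 1 = c 0 := le_antisymm (hper ▸ hmono (hp m)) (hmono zero_le_one)
  simpa [c, shift] using this

lemma isClosed_setOf_periodic (p : Fin n → ℕ) : IsClosed {u : Zn n → ℝ | Periodic p u} := by
  simp only [Periodic, Set.ofPred_forall]
  exact isClosed_iInter fun i => isClosed_iInter fun m =>
    isClosed_eq (continuous_apply _) (continuous_apply _)

lemma sum_Tbox_add {M : Type*} [AddCommMonoid M] (hp : ∀ m, 1 ≤ p m) {f : Zn n → M}
    (hf : ∀ x, f (reduce p x) = f x) (e : Zn n) :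
    ∑ j ∈ Tbox p, f (j + e) = ∑ j ∈ Tbox p, f j := by
  refine Finset.sum_nbij' (fun j => reduce p (j + e)) (fun j => reduce p (j - e))
    (fun j _ => reduce_mem_Tbox hp _) (fun j _ => reduce_mem_Tbox hp _) (fun j hj => ?_)
    (fun j hj => ?_) (fun j _ => (hf _).symm)
  · rw [sub_eq_neg_add, reduce_add_reduce, neg_add_cancel_comm_assoc, reduce_eq_self hj]
  · rw [add_comm, reduce_add_reduce, add_sub_cancel, reduce_eq_self hj]

lemma J0p_shift (hp : ∀ m, 1 ≤ p m) (s : (Zn n → ℝ) → ℝ) {u : Zn n → ℝ}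
    (hu : Periodic p u) (e : Zn n) : J0p s p (shift e u) = J0p s p u := by
  have hshift : ∀ j, shift j (shift e u) = shift (j + e) u :=
    fun j => funext fun i => by simp only [shift, add_assoc]
  simp only [J0p, Spot, hshift]
  exact sum_Tbox_add hp (f := fun j => s (shift j u)) (fun x => by rw [hu.shift_reduce]) e

end Periodicity

lemma antitone_of_antitone_update {ι : Type*} [DecidableEq ι] {f : (ι → ℝ) → ℝ}
    (S : Finset ι) (hf : ∀ j ∈ S, ∀ u, Antitone fun t => f (Function.update u j t))
    {w w' : ι → ℝ} (hle : w ≤ w') (heq : ∀ i ∉ S, w i = w' i) : f w' ≤ f w := by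
  induction S using Finset.induction_on generalizing w with
  | empty => exact (congrArg f (funext fun i => heq i (Finset.notMem_empty i))).ge
  | @insert a S _ ih =>
    have hle₁ : Function.update w a (w' a) ≤ w' :=
      update_le_iff.mpr ⟨le_rfl, fun j _ => hle j⟩
    have heq₁ : ∀ i ∉ S, Function.update w a (w' a) i = w' i := fun i hi => by
      by_cases h : i = a
      · subst h; simp
      · simpa [h] using heq i (by simp [h, hi])
    calc f w' ≤ f (Function.update w a (w' a)) :=
          ih (fun j hj => hf j (Finset.mem_insert_of_mem hj)) hle₁ heq₁
      _ ≤ f (Function.update w a (w a)) := hf a (Finset.mem_insert_self a S) w (hle a)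
      _ = f w := by rw [Function.update_eq_self]

section Potential

variable {r : ℕ}

def restr (r : ℕ) (u : Zn n → ℝ) : EuclideanSpace ℝ (ball r (0 : Zn n)) :=
  WithLp.toLp 2 fun k => u k.1

lemma continuous_restr : Continuous (restr r : (Zn n → ℝ) → _) :=
  (PiLp.continuous_toLp 2 _).comp (continuous_pi fun k => continuous_apply k.1)

lemma restr_eq_sum (c : Zn n → ℝ) :
    restr r c = ∑ k ∈ ball r 0, c k • restr r (Pi.single k 1) := by
  ext k
  simp [restr, Pi.single_apply, Finset.sum_apply]

lemma update_eq_add_smul_single (u : Zn n → ℝ) (k : Zn n) (t : ℝ) :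
    Function.update u k t = Function.update u k 0 + t • Pi.single k 1 := by
  funext i
  by_cases h : i = k <;> simp [h]

variable {G : EuclideanSpace ℝ (ball r (0 : Zn n)) → ℝ}

lemma hasDerivAt_comp_restr (hG : Differentiable ℝ G) (u c : Zn n → ℝ) (t : ℝ) :
    HasDerivAt (fun t => G (restr r (u + t • c)))
      (fderiv ℝ G (restr r (u + t • c)) (restr r c)) t := by
  have hline : HasDerivAt (fun t : ℝ => restr r u + t • restr r c) (restr r c) t := by
    simpa using ((hasDerivAt_id t).smul_const (restr r c)).const_add (restr r u)
  exact (hG _).hasFDerivAt.comp_hasDerivAt t hline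

lemma hasDerivAt_comp_restr_update (hG : Differentiable ℝ G) (u : Zn n → ℝ) (k : Zn n)
    (t : ℝ) :
    HasDerivAt (fun t => G (restr r (Function.update u k t)))
      (fderiv ℝ G (restr r (Function.update u k t)) (restr r (Pi.single k 1))) t := by
  simpa only [← update_eq_add_smul_single] using
    hasDerivAt_comp_restr hG (Function.update u k 0) (Pi.single k 1) t

lemma pd_comp_restr (hG : Differentiable ℝ G) (k : Zn n) (u : Zn n → ℝ) :
    pd (fun v => G (restr r v)) k u = fderiv ℝ G (restr r u) (restr r (Pi.single k 1)) := by
  simpa [pd] using (hasDerivAt_comp_restr_update hG u k (u k)).deriv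

namespace Setup

lemma one_le_r (P : Setup n r) : 1 ≤ r := by
  by_contra! hr
  obtain rfl : r = 0 := by omega
  set e : Zn n := unitv ⟨0, P.npos⟩
  have hpd : pd P.s e = fun _ => 0 := funext fun w => by
    have hconst : (fun t => P.s (Function.update w e t)) = fun _ => P.s w :=
      funext fun t => P.localized _ _ fun k hk => Function.update_of_ne
        (by rintro rfl; simp [e, znorm_unitv] at hk) _ _
    simp only [pd, hconst, deriv_const]
  have h := P.S3' e (znorm_unitv _) 0
  rw [pd2, hpd] at h
  simp [pd] at h

variable (P : Setup n r)

lemma s_eq_sEuc (u : Zn n → ℝ) : P.s u = sEuc r P.s (restr r u) :=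
  P.localized _ _ fun k hk => by simp [restr, mem_ball_zero.mpr hk]

lemma continuous_s : Continuous P.s := by
  rw [show P.s = sEuc r P.s ∘ restr r from funext P.s_eq_sEuc]
  exact P.smooth.continuous.comp continuous_restr

lemma differentiable_sEuc : Differentiable ℝ (sEuc r P.s) :=
  P.smooth.differentiable two_ne_zero

/-- `∂_k s`, in the coordinates used by `sEuc`. -/
def partialEuc (k : Zn n) : EuclideanSpace ℝ (ball r (0 : Zn n)) → ℝ :=
  fun x => fderiv ℝ (sEuc r P.s) x (restr r (Pi.single k 1))

lemma differentiable_partialEuc (k : Zn n) : Differentiable ℝ (P.partialEuc k) :=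
  ((ContinuousLinearMap.apply ℝ ℝ (restr r (Pi.single k 1))).contDiff.comp
    (P.smooth.fderiv_right le_rfl)).differentiable one_ne_zero

lemma pd_eq_partialEuc (k : Zn n) (u : Zn n → ℝ) : pd P.s k u = P.partialEuc k (restr r u) := by
  simpa only [← P.s_eq_sEuc, partialEuc] using pd_comp_restr P.differentiable_sEuc k u

lemma pd_congr (k : Zn n) {u v : Zn n → ℝ} (h : ∀ i, znorm i ≤ r → u i = v i) :
    pd P.s k u = pd P.s k v := by
  rw [P.pd_eq_partialEuc, P.pd_eq_partialEuc]
  congr 1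
  ext i
  exact h i (mem_ball_zero.mp i.2)

lemma hasDerivAt_update (u : Zn n → ℝ) (k : Zn n) (t : ℝ) :
    HasDerivAt (fun t => P.s (Function.update u k t)) (pd P.s k (Function.update u k t)) t := by
  simpa only [← P.s_eq_sEuc, ← pd_comp_restr P.differentiable_sEuc] using
    hasDerivAt_comp_restr_update P.differentiable_sEuc u k t

lemma hasDerivAt_pd_update (u : Zn n → ℝ) (j k : Zn n) (t : ℝ) :
    HasDerivAt (fun t => pd P.s k (Function.update u j t))
      (pd2 P.s j k (Function.update u j t)) t := by
  have hpd : pd P.s k = fun v => P.partialEuc k (restr r v) := funext (P.pd_eq_partialEuc k)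
  simpa only [pd2, hpd, ← pd_comp_restr (P.differentiable_partialEuc k)] using
    hasDerivAt_comp_restr_update (P.differentiable_partialEuc k) u j t

lemma hasDerivAt_line (u c : Zn n → ℝ) (t : ℝ) :
    HasDerivAt (fun t => P.s (u + t • c))
      (∑ k ∈ ball r 0, c k * pd P.s k (u + t • c)) t := by
  convert hasDerivAt_comp_restr P.differentiable_sEuc u c t using 1
  · exact funext fun t => P.s_eq_sEuc _
  · simp only [P.pd_eq_partialEuc, partialEuc]
    rw [restr_eq_sum c, map_sum]
    simp only [map_smul, smul_eq_mul]

lemma antitone_pd_update {j k : Zn n} (hj : znorm j ≤ r) (hk : znorm k ≤ r) (hjk : j ≠ k)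
    (u : Zn n → ℝ) : Antitone fun t => pd P.s k (Function.update u j t) :=
  antitone_of_deriv_nonpos (fun t => (P.hasDerivAt_pd_update u j k t).differentiableAt)
    fun t => (P.hasDerivAt_pd_update u j k t).deriv ▸ P.S3 j k hj hk hjk _

lemma strictAnti_pd_update_zero {k : Zn n} (hk : znorm k = 1) (u : Zn n → ℝ) :
    StrictAnti fun t => pd P.s k (Function.update u 0 t) :=
  strictAnti_of_deriv_neg fun t => (P.hasDerivAt_pd_update u 0 k t).deriv ▸ P.S3' k hk _

lemma pd_le_pd_of_le {k : Zn n} (hk : znorm k ≤ r) {w w' : Zn n → ℝ} (hle : w ≤ w')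
    (hk' : w k = w' k) : pd P.s k w' ≤ pd P.s k w := by
  classical
  set S := (ball r (0 : Zn n)).erase k
  have hw' : pd P.s k w' = pd P.s k (S.piecewise w' w) := P.pd_congr k fun i hi => by
    by_cases h : i = k
    · subst h; simp [S, hk']
    · simp [S, h, mem_ball_zero.mpr hi]
  rw [hw']
  refine antitone_of_antitone_update S (fun j hj u => ?_) (fun i => ?_)
    (fun i hi => (S.piecewise_eq_of_notMem _ _ hi).symm)
  · obtain ⟨hjk, hj⟩ := Finset.mem_erase.mp hj
    exact P.antitone_pd_update (mem_ball_zero.mp hj) hk hjk u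
  · by_cases hi : i ∈ S <;> simp [hi, hle i]

lemma pd_lt_pd_of_le {k : Zn n} (hk : znorm k = 1) {w w' : Zn n → ℝ} (hle : w ≤ w')
    (hk' : w k = w' k) (h0 : w 0 < w' 0) : pd P.s k w' < pd P.s k w := by
  have hk0 : k ≠ 0 := by rintro rfl; simp [znorm] at hk
  have hle₀ : Function.update w 0 (w' 0) ≤ w' :=
    update_le_iff.mpr ⟨le_rfl, fun j _ => hle j⟩
  calc pd P.s k w' ≤ pd P.s k (Function.update w 0 (w' 0)) :=
        P.pd_le_pd_of_le (hk ▸ P.one_le_r) hle₀ (by rw [Function.update_of_ne hk0, hk'])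
    _ < pd P.s k (Function.update w 0 (w 0)) := P.strictAnti_pd_update_zero hk w h0
    _ = pd P.s k w := by rw [Function.update_eq_self]

/-- Increasing differences: the integrated form of (S3). -/
lemma s_update_sub_le {k : Zn n} (hk : znorm k ≤ r) {w w' : Zn n → ℝ} (hle : w ≤ w')
    (hk' : w k = w' k) {t : ℝ} (ht : w k ≤ t) :
    P.s (Function.update w' k t) - P.s w' ≤ P.s (Function.update w k t) - P.s w := by
  set φ : ℝ → ℝ := fun t => P.s (Function.update w' k t) - P.s (Function.update w k t)
  have hφ : ∀ t, HasDerivAt φ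
      (pd P.s k (Function.update w' k t) - pd P.s k (Function.update w k t)) t :=
    fun t => (P.hasDerivAt_update w' k t).sub (P.hasDerivAt_update w k t)
  have hanti : Antitone φ := antitone_of_deriv_nonpos (fun t => (hφ t).differentiableAt)
    fun t => by
      rw [(hφ t).deriv, sub_nonpos]
      exact P.pd_le_pd_of_le hk (update_le_update_iff.mpr ⟨le_rfl, fun j _ => hle j⟩) (by simp)
  have hw : Function.update w k (w k) = w := Function.update_eq_self k w
  have hw' : Function.update w' k (w k) = w' := by rw [hk', Function.update_eq_self]
  have := hanti ht
  simp only [φ, hw, hw'] at this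
  linarith

lemma s_sup_sub_le_of_update {u v : Zn n → ℝ} {a : Zn n} (ha : znorm a ≤ r)
    (hva : v a < u a) :
    P.s (u ⊔ v) - P.s (Function.update u a (v a) ⊔ v)
      ≤ P.s u - P.s (Function.update u a (v a)) := by
  set u' := Function.update u a (v a)
  have hsup : Function.update (u' ⊔ v) a (u a) = u ⊔ v := funext fun i => by
    by_cases h : i = a
    · subst h; simp [hva.le]
    · simp [u', h]
  have hu' : Function.update u' a (u a) = u := by simp [u']
  simpa only [hsup, hu'] using P.s_update_sub_le ha (w := u') (w' := u' ⊔ v) le_sup_left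
    (by simp [u']) (t := u a) (by simp [u', hva.le])

lemma s_inf_add_s_sup_le (u v : Zn n → ℝ) :
    P.s (u ⊓ v) + P.s (u ⊔ v) ≤ P.s u + P.s v := by
  classical
  suffices h : ∀ (D : Finset (Zn n)) (u : Zn n → ℝ),
      (∀ i, znorm i ≤ r → v i < u i → i ∈ D) →
      P.s (u ⊓ v) + P.s (u ⊔ v) ≤ P.s u + P.s v from
    h (ball r 0) u fun i hi _ => mem_ball_zero.mpr hi
  -- lower `u` to `v`, one coordinate of `{v < u}` at a time
  intro D
  induction D using Finset.induction_on with
  | empty =>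
    intro u hu
    have hle : ∀ i, znorm i ≤ r → u i ≤ v i :=
      fun i hi => not_lt.mp fun h => by simpa using hu i hi h
    rw [P.localized (u ⊓ v) u fun i hi => inf_eq_left.mpr (hle i hi),
      P.localized (u ⊔ v) v fun i hi => sup_eq_right.mpr (hle i hi)]
  | @insert a D _ ih =>
    intro u hu
    by_cases hau : znorm a ≤ r ∧ v a < u a
    swap
    · refine ih u fun i hi hvi => (Finset.mem_insert.mp (hu i hi hvi)).resolve_left ?_
      rintro rfl
      exact hau ⟨hi, hvi⟩
    set u' := Function.update u a (v a)
    have hinf : u' ⊓ v = u ⊓ v := funext fun i => by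
      by_cases h : i = a
      · subst h; simp [u', hau.2.le]
      · simp [u', h]
    have hIH := ih u' fun i hi hvi => by
      have hia : i ≠ a := by rintro rfl; simp [u'] at hvi
      simp only [u', Function.update_of_ne hia] at hvi
      exact (Finset.mem_insert.mp (hu i hi hvi)).resolve_left hia
    rw [hinf] at hIH
    linarith [P.s_sup_sub_le_of_update hau.1 hau.2]

lemma J0p_inf_add_J0p_sup_le (p : Fin n → ℕ) (u v : Zn n → ℝ) :
    J0p P.s p (u ⊓ v) + J0p P.s p (u ⊔ v) ≤ J0p P.s p u + J0p P.s p v := by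
  simp only [J0p, Spot, ← Finset.sum_add_distrib]
  exact Finset.sum_le_sum fun j _ => P.s_inf_add_s_sup_le (shift j u) (shift j v)

end Setup

end Potential

section Minimizers

variable {r : ℕ} {p : Fin n → ℕ}

def periodicDelta (p : Fin n → ℕ) (i : Zn n) : Zn n → ℝ :=
  fun x => if reduce p x = reduce p i then 1 else 0

lemma periodic_periodicDelta (p : Fin n → ℕ) (i : Zn n) : Periodic p (periodicDelta p i) := by
  intro x m
  have : reduce p (x + (p m : ℤ) • unitv m) = reduce p x := funext fun m' => by
    by_cases h : m' = m
    · subst h; simp [reduce, unitv]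
    · simp [reduce, unitv, h]
  simp only [periodicDelta, this]

namespace Setup

variable (P : Setup n r)

lemma c0p_le_J0p (p : Fin n → ℕ) {u : Zn n → ℝ} (hu : Periodic p u) :
    c0p P.s p ≤ J0p P.s p u := by
  obtain ⟨b, hb⟩ := P.S2_bddBelow
  refine csInf_le ⟨(Tbox p).card • b, ?_⟩ ⟨u, hu, rfl⟩
  rintro _ ⟨v, -, rfl⟩
  exact Finset.card_nsmul_le_sum _ _ _ fun j _ => hb (shift j v)

lemma J0p_inf_eq_c0p {u v : Zn n → ℝ} (hu : Periodic p u) (hv : Periodic p v)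
    (hmu : J0p P.s p u = c0p P.s p) (hmv : J0p P.s p v = c0p P.s p) :
    J0p P.s p (u ⊓ v) = c0p P.s p := by
  have := P.J0p_inf_add_J0p_sup_le p u v
  have := P.c0p_le_J0p p (hu.sup hv)
  exact le_antisymm (by linarith) (P.c0p_le_J0p p (hu.inf hv))

/-- `(J_0^p)'(u)` applied to `periodicDelta p i`. -/
def elPairing (p : Fin n → ℕ) (i : Zn n) (u : Zn n → ℝ) : ℝ :=
  ∑ j ∈ Tbox p, ∑ k ∈ ball r 0, periodicDelta p i (k + j) * pd P.s k (shift j u)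

lemma hasDerivAt_J0p_line (p : Fin n → ℕ) (u c : Zn n → ℝ) (t : ℝ) :
    HasDerivAt (fun t => J0p P.s p (u + t • c))
      (∑ j ∈ Tbox p, ∑ k ∈ ball r 0, c (k + j) * pd P.s k (shift j (u + t • c))) t :=
  HasDerivAt.fun_sum fun j _ => P.hasDerivAt_line (shift j u) (shift j c) t

lemma elPairing_eq_zero {u : Zn n → ℝ} (hu : Periodic p u) (hmin : J0p P.s p u = c0p P.s p)
    (i : Zn n) : P.elPairing p i u = 0 := by
  have hloc : IsLocalMin (fun t : ℝ => J0p P.s p (u + t • periodicDelta p i)) 0 :=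
    Filter.Eventually.of_forall fun t => by
      simpa [hmin] using P.c0p_le_J0p p (hu.add ((periodic_periodicDelta p i).smul t))
  simpa [elPairing] using hloc.hasDerivAt_eq_zero (P.hasDerivAt_J0p_line p u _ 0)

/-- The strict comparison principle, in its infinitesimal form. -/
lemma elPairing_lt (hp : ∀ m, 1 ≤ p m) {w w' : Zn n → ℝ} (hw : Periodic p w)
    (hw' : Periodic p w') (hle : w ≤ w') {i j : Zn n} (hi : w i = w' i)
    (hij : znorm (j - i) = 1) (hj : w j < w' j) : P.elPairing p i w' < P.elPairing p i w := by
  have hagree : ∀ x, reduce p x = reduce p i → w x = w' x := fun x hx => by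
    rw [hw.apply_eq_of_reduce_eq hx, hw'.apply_eq_of_reduce_eq hx, hi]
  have hterm : ∀ l, ∀ k ∈ ball r 0, periodicDelta p i (k + l) * pd P.s k (shift l w')
      ≤ periodicDelta p i (k + l) * pd P.s k (shift l w) := fun l k hk => by
    by_cases h : reduce p (k + l) = reduce p i
    · simp only [periodicDelta, if_pos h, one_mul]
      exact P.pd_le_pd_of_le (mem_ball_zero.mp hk) (fun x => hle _) (hagree _ h)
    · simp [periodicDelta, h]
  have hred : reduce p ((i - j) + reduce p j) = reduce p i := by
    rw [reduce_add_reduce, sub_add_cancel]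
  have hk : znorm (i - j) = 1 := by rw [← znorm_neg, neg_sub, hij]
  refine Finset.sum_lt_sum (fun l _ => Finset.sum_le_sum (hterm l))
    ⟨reduce p j, reduce_mem_Tbox hp j, Finset.sum_lt_sum (hterm _)
      ⟨i - j, mem_ball_zero.mpr (hk ▸ P.one_le_r), ?_⟩⟩
  simp only [periodicDelta, if_pos hred, one_mul]
  refine P.pd_lt_pd_of_le hk (fun x => hle _) (hagree _ hred) ?_
  simpa only [shift, zero_add, hw.apply_reduce, hw'.apply_reduce] using hj

lemma eq_of_le_of_apply_eq (hp : ∀ m, 1 ≤ p m) {u v : Zn n → ℝ} (hu : Periodic p u)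
    (hv : Periodic p v) (hmu : J0p P.s p u = c0p P.s p) (hmv : J0p P.s p v = c0p P.s p)
    (hle : u ≤ v) {i : Zn n} (hi : u i = v i) : u = v := by
  by_contra hne
  obtain ⟨a, ha⟩ := Function.ne_iff.mp hne
  obtain ⟨i₀, j₀, hi₀, hj₀, hij⟩ := exists_adjacent_boundary (fun x => u x = v x) hi ha
  have := P.elPairing_lt hp hu hv hle hi₀ hij (lt_of_le_of_ne (hle j₀) hj₀)
  rw [P.elPairing_eq_zero hu hmu, P.elPairing_eq_zero hv hmv] at this
  exact this.false

lemma le_total_of_minimizers (hp : ∀ m, 1 ≤ p m) {u v : Zn n → ℝ} (hu : Periodic p u)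
    (hv : Periodic p v) (hmu : J0p P.s p u = c0p P.s p) (hmv : J0p P.s p v = c0p P.s p) :
    u ≤ v ∨ v ≤ u := by
  by_contra! h
  obtain ⟨a, ha⟩ : ∃ a, v a < u a := by simpa [Pi.le_def] using h.1
  obtain ⟨b, hb⟩ : ∃ b, u b < v b := by simpa [Pi.le_def] using h.2
  have heq := P.eq_of_le_of_apply_eq hp (hu.inf hv) hu (P.J0p_inf_eq_c0p hu hv hmu hmv) hmu
    inf_le_left (i := b) (min_eq_left hb.le)
  have := congrFun heq a
  simp only [Pi.inf_apply, min_eq_right ha.le] at this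
  exact ha.ne this

lemma periodicAll_of_minimizer (hp : ∀ m, 1 ≤ p m) {u : Zn n → ℝ} (hu : Periodic p u)
    (hmin : J0p P.s p u = c0p P.s p) : PeriodicAll u := by
  intro i m
  have hsh : J0p P.s p (shift (unitv m) u) = c0p P.s p := (J0p_shift hp P.s hu _).trans hmin
  have : shift (unitv m) u = u :=
    (P.le_total_of_minimizers hp hu (periodic_shift hu _) hmin hsh).elim
      (hu.shift_unitv_eq_of_le hp) fun h => neg_inj.mp (hu.neg.shift_unitv_eq_of_le hp
        fun x => neg_le_neg (h x))
  simpa [shift] using congrFun this i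

end Setup

end Minimizers

section MountainPass

variable {r : ℕ} {p : Fin n → ℕ}

lemma J0p_of_periodicAll (s : (Zn n → ℝ) → ℝ) (p : Fin n → ℕ) {u : Zn n → ℝ}
    (hu : PeriodicAll u) : J0p s p u = (Tbox p).card • J0 s u := by
  have hshift : ∀ j, shift j u = u := fun j => funext fun i => hu.apply_eq _ _
  simp [J0p, J0, Spot, hshift]

lemma isCompact_G0 (p : Fin n → ℕ) (v0 w0 : Zn n → ℝ) : IsCompact (G0 p v0 w0) :=
  isCompact_Icc.inter_left (isClosed_setOf_periodic p)

lemma pathIn_smul {v0 w0 : Zn n → ℝ} (hv : Periodic p v0) (hw : Periodic p w0)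
    (hle : v0 ≤ w0) : PathIn p v0 w0 fun θ => θ • (w0 - v0) := by
  refine ⟨?_, fun θ hθ => ⟨(hw.sub hv).smul θ, fun i => ?_, fun i => ?_⟩,
    zero_smul _ _, one_smul _ _⟩
  · show ContinuousOn (fun θ : ℝ => WithLp.toLp 2 (θ • fun j : Tbox p => (w0 - v0) j.1)) _
    simp_rw [WithLp.toLp_smul]
    fun_prop
  · exact mul_nonneg hθ.1 (sub_nonneg.mpr (hle i))
  · exact mul_le_of_le_one_left (sub_nonneg.mpr (hle i)) hθ.2

lemma PathIn.exists_apply_zero_eq (hp : ∀ m, 1 ≤ p m) {v0 w0 : Zn n → ℝ}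
    {h : ℝ → Zn n → ℝ} (hh : PathIn p v0 w0 h) {y : ℝ}
    (hy : y ∈ Set.Icc 0 (w0 0 - v0 0)) :
    ∃ θ ∈ Set.Icc (0 : ℝ) 1, h θ 0 = y := by
  have hcont : ContinuousOn (fun θ => h θ 0) (Set.Icc 0 1) :=
    (PiLp.continuous_apply 2 (fun _ : Tbox p => ℝ) ⟨0, zero_mem_Tbox hp⟩).comp_continuousOn
      hh.1
  exact intermediate_value_Icc zero_le_one hcont (by simpa [hh.2.2.1, hh.2.2.2] using hy)

namespace Setup

variable (P : Setup n r)

lemma c0_le_J0 {u : Zn n → ℝ} (hu : PeriodicAll u) : c0 P.s ≤ J0 P.s u := by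
  obtain ⟨b, hb⟩ := P.S2_bddBelow
  exact csInf_le ⟨b, by rintro _ ⟨v, -, rfl⟩; exact hb _⟩ ⟨u, hu, rfl⟩

lemma mem_M0_of_minimizer (hp : ∀ m, 1 ≤ p m) {v0 u : Zn n → ℝ} (hv0 : v0 ∈ M0 P.s)
    (hu : PeriodicAll u) (hmin : J0p P.s p u = c0p P.s p) : u ∈ M0 P.s := by
  refine ⟨hu, le_antisymm ?_ (P.c0_le_J0 hu)⟩
  have h := P.c0p_le_J0p p hv0.1.periodic
  rw [← hmin, J0p_of_periodicAll _ _ hu, J0p_of_periodicAll _ _ hv0.1, hv0.2] at h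
  exact le_of_nsmul_le_nsmul_right (Finset.card_pos.mpr ⟨0, zero_mem_Tbox hp⟩).ne' h

lemma continuous_I0p (p : Fin n → ℕ) (v0 : Zn n → ℝ) : Continuous (I0p P.s p v0) :=
  continuous_finsetSum _ fun j _ => P.continuous_s.comp <|
    continuous_pi fun i => (continuous_apply (i + j)).add continuous_const

lemma bddAbove_I0p_path {v0 w0 : Zn n → ℝ} {h : ℝ → Zn n → ℝ} (hh : PathIn p v0 w0 h) :
    BddAbove ((fun θ => I0p P.s p v0 (h θ)) '' Set.Icc 0 1) :=
  ((isCompact_G0 p v0 w0).bddAbove_image (P.continuous_I0p p v0).continuousOn).mono <| by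
    rintro _ ⟨θ, hθ, rfl⟩
    exact ⟨h θ, hh.2.1 θ hθ, rfl⟩

lemma exists_gap (hp : ∀ m, 1 ≤ p m) {v0 w0 : Zn n → ℝ} (hv0 : v0 ∈ M0 P.s)
    (hw0 : w0 ∈ M0 P.s) (hlt : ∀ i, v0 i < w0 i)
    (hadj : ∀ u ∈ M0 P.s, u ≠ v0 → u ≠ w0 → ¬(v0 ≤ u ∧ u ≤ w0)) :
    ∃ δ, c0p P.s p < δ ∧
      ∀ u ∈ G0 p v0 w0, u 0 = (w0 0 - v0 0) / 2 → δ ≤ I0p P.s p v0 u := by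
  have hv : Periodic p v0 := hv0.1.periodic
  set K := G0 p v0 w0 ∩ {u | u 0 = (w0 0 - v0 0) / 2}
  have hK : IsCompact K :=
    (isCompact_G0 p v0 w0).inter_right (isClosed_eq (continuous_apply 0) continuous_const)
  have hhalf : (1 / 2 : ℝ) • (w0 - v0) ∈ K := by
    have := pathIn_smul hv hw0.1.periodic fun i => (hlt i).le
    exact ⟨this.2.1 _ ⟨by norm_num, by norm_num⟩, by simp; ring⟩
  obtain ⟨u, ⟨hu, hu0⟩, hmin⟩ :=
    hK.exists_isMinOn ⟨_, hhalf⟩ (P.continuous_I0p p v0).continuousOn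
  refine ⟨I0p P.s p v0 u, (P.c0p_le_J0p p (hu.1.add hv)).lt_of_ne fun heq => ?_,
    fun w hw hw0 => hmin ⟨hw, hw0⟩⟩
  have hM : u + v0 ∈ M0 P.s := P.mem_M0_of_minimizer hp hv0
    (P.periodicAll_of_minimizer hp (hu.1.add hv) heq.symm) heq.symm
  have hmid : (u + v0) 0 = (v0 0 + w0 0) / 2 := by
    rw [Pi.add_apply, show u 0 = _ from hu0]
    ring
  refine hadj _ hM (fun h => ?_) (fun h => ?_)
    ⟨fun i => by simpa using hu.2.1 i, fun i => by simpa [le_sub_iff_add_le] using hu.2.2 i⟩ <;>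
  linarith [congrFun h 0, hlt 0]

end Setup

end MountainPass

/-- the mountain pass level satisfies `d_0^p > c_0^p`. -/
theorem statement4 {n r : ℕ} (P : Setup n r) (v0 w0 : Zn n → ℝ)
    (hv0 : v0 ∈ M0 P.s) (hw0 : w0 ∈ M0 P.s) (hlt : ∀ i, v0 i < w0 i)
    (hadj : ∀ u ∈ M0 P.s, u ≠ v0 → u ≠ w0 → ¬(v0 ≤ u ∧ u ≤ w0))
    (p : Fin n → ℕ) (hp : ∀ m, 1 ≤ p m) :
    c0p P.s p < d0p P.s p v0 w0 := by
  obtain ⟨δ, hδ, hgap⟩ := P.exists_gap hp hv0 hw0 hlt hadj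
  have hpath := pathIn_smul (p := p) hv0.1.periodic hw0.1.periodic fun i => (hlt i).le
  refine hδ.trans_le (le_csInf ⟨_, _, hpath, rfl⟩ ?_)
  rintro _ ⟨h, hh, rfl⟩
  obtain ⟨θ, hθ, hmid⟩ := hh.exists_apply_zero_eq hp (y := (w0 0 - v0 0) / 2)
    ⟨by linarith [hlt 0], by linarith [hlt 0]⟩
  exact (hgap _ (hh.2.1 θ hθ) hmid).trans (le_csSup (P.bddAbove_I0p_path hh) ⟨θ, hθ, rfl⟩)

end

end FK
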